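/- Let f₁ : X → X₁ and f₂ : X → X₂, x ∼ D on a finite set, and suppose u₁(x) and u₂(x) are both ε-intersections of f₁(x) and f₂(x) (via invertible decompositions r₁ⁱ(f₁(x)) = (e₁ⁱ(x), uᵢ(x)) and r₂ⁱ(f₂(x)) = (e₂ⁱ(x), uᵢ(x)) with I(e_jⁱ(x); f_k(x)) ≤ ε for j ≠ k). Then I(u₁(x); u₂(x)) ≥ max(H(u₁(x)), H(u₂(x))) - ε, and consequently there exist functions s₁, s₂ such that ℙ[s_i(u_i(x)) ≠ u_j(x)] ≤ 1 - 2^{-ε} for i ≠ j. -/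

import Mathlib

open scoped Classical

/-- Probability of an event under distribution `D` on a finite sample space. -/
noncomputable def pr {Ω : Type*} [Fintype Ω] (D : Ω → ℝ) (p : Ω → Prop) : ℝ :=
  ∑ x, if p x then D x else 0

/-- Shannon entropy (base 2) of a random variable `f` under `D`. -/
noncomputable def ent {Ω A : Type*} [Fintype Ω] (D : Ω → ℝ) (f : Ω → A) : ℝ :=
  -∑ a ∈ Finset.image f Finset.univ,
      pr D (fun x => f x = a) * Real.logb 2 (pr D (fun x => f x = a))

/-- Mutual information (base 2) between random variables `f` and `g` under `D`. -/
noncomputable def mi {Ω A B : Type*} [Fintype Ω] (D : Ω → ℝ) (f : Ω → A) (g : Ω → B) : ℝ :=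
  ent D f + ent D g - ent D (fun x => (f x, g x))

/-- Binary entropy function (base 2). -/
noncomputable def binEnt (p : ℝ) : ℝ := -(p * Real.logb 2 p) - (1 - p) * Real.logb 2 (1 - p)

/-- `D` is a probability distribution. -/
def IsProb {Ω : Type*} [Fintype Ω] (D : Ω → ℝ) : Prop :=
  (∀ x, 0 ≤ D x) ∧ ∑ x, D x = 1

section Lemmas
variable {Ω A B C : Type*} [Fintype Ω] {D : Ω → ℝ}

lemma pr_congr {p q : Ω → Prop} (h : ∀ x, p x ↔ q x) (D : Ω → ℝ) : pr D p = pr D q :=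
  Finset.sum_congr rfl fun x _ => by simp only [h x]

lemma pr_nonneg (hD0 : ∀ x, 0 ≤ D x) (p : Ω → Prop) : 0 ≤ pr D p :=
  Finset.sum_nonneg fun x _ => by split_ifs; exacts [hD0 x, le_refl 0]

lemma pr_mono (hD0 : ∀ x, 0 ≤ D x) {p q : Ω → Prop} (h : ∀ x, p x → q x) : pr D p ≤ pr D q :=
  Finset.sum_le_sum fun x _ => by
    by_cases hp : p x
    · simp [hp, h x hp]
    · simp only [hp, if_false]; split_ifs; exacts [hD0 x, le_refl 0]

lemma le_pr_self (hD0 : ∀ x, 0 ≤ D x) (f : Ω → A) (x : Ω) :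
    D x ≤ pr D (fun y => f y = f x) := by
  have := Finset.single_le_sum (f := fun y => if f y = f x then D y else 0)
    (fun y _ => by split_ifs; exacts [hD0 y, le_refl 0]) (Finset.mem_univ x)
  simpa [pr] using this

lemma sum_mul_comp [DecidableEq A] (D : Ω → ℝ) (f : Ω → A) (h : A → ℝ) :
    ∑ x, D x * h (f x) = ∑ a ∈ Finset.image f Finset.univ, pr D (fun x => f x = a) * h a := by
  refine (Finset.sum_image' (fun x => D x * h (f x)) fun c _ => ?_).symm
  have h1 : pr D (fun x => f x = f c) = ∑ x ∈ Finset.univ.filter (fun x => f x = f c), D x := by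
    rw [Finset.sum_filter]
    exact Finset.sum_congr rfl fun x _ => by congr
  rw [h1, Finset.sum_mul]
  exact Finset.sum_congr rfl fun x hx => by rw [(Finset.mem_filter.1 hx).2]

lemma pr_total [DecidableEq A] (hD : IsProb D) (f : Ω → A) :
    ∑ a ∈ Finset.image f Finset.univ, pr D (fun x => f x = a) = 1 := by
  have := sum_mul_comp D f (fun _ => (1:ℝ))
  simp only [mul_one] at this
  rw [← this, hD.2]

lemma ent_eq_sum (D : Ω → ℝ) (f : Ω → A) :
    ent D f = -∑ x, D x * Real.logb 2 (pr D (fun y => f y = f x)) := by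
  rw [ent]
  congr 1
  exact (sum_mul_comp D f (fun a => Real.logb 2 (pr D (fun y => f y = a)))).symm

lemma ent_comp_inj (D : Ω → ℝ) (f : Ω → A) {r : A → B} (hr : Function.Injective r) :
    ent D (fun x => r (f x)) = ent D f := by
  rw [ent_eq_sum, ent_eq_sum]
  congr 1
  refine Finset.sum_congr rfl fun x _ => ?_
  have : pr D (fun y => r (f y) = r (f x)) = pr D (fun y => f y = f x) :=
    pr_congr (fun y => ⟨fun h => hr h, fun h => by rw [h]⟩) D
  rw [this]

lemma pr_add_compl (hD : IsProb D) (p : Ω → Prop) : pr D p + pr D (fun x => ¬ p x) = 1 := by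
  unfold pr
  rw [← Finset.sum_add_distrib, ← hD.2]
  exact Finset.sum_congr rfl fun x _ => by by_cases h : p x <;> simp [h]


lemma gibbs (hD : IsProb D) (t : Ω → ℝ) (ht : ∀ x, 0 < D x → 0 < t x)
    {M : ℝ} (hM : 0 < M) (hsum : ∑ x, D x * t x ≤ M) :
    ∑ x, D x * Real.logb 2 (t x) ≤ Real.logb 2 M := by
  have hlog2 : (0:ℝ) < Real.log 2 := Real.log_pos one_lt_two
  have key : ∑ x, D x * Real.log (t x) ≤ Real.log M := by
    have h1 : ∀ x ∈ Finset.univ, D x * Real.log (t x) ≤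
        D x * Real.log M + (D x * t x / M - D x) := by
      intro x _
      rcases (hD.1 x).lt_or_eq with hx | hx
      · have htx := ht x hx
        have h2 : Real.log (t x / M) ≤ t x / M - 1 :=
          Real.log_le_sub_one_of_pos (div_pos htx hM)
        rw [Real.log_div htx.ne' hM.ne'] at h2
        have h3 := mul_le_mul_of_nonneg_left h2 hx.le
        have h4 : D x * (Real.log (t x) - Real.log M)
            = D x * Real.log (t x) - D x * Real.log M := by ring
        have h5 : D x * (t x / M - 1) = D x * t x / M - D x := by ring
        rw [h4, h5] at h3
        linarith
      · rw [← hx]; simp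
    calc ∑ x, D x * Real.log (t x)
        ≤ ∑ x, (D x * Real.log M + (D x * t x / M - D x)) := Finset.sum_le_sum h1
      _ = (∑ x, D x) * Real.log M + ((∑ x, D x * t x) / M - ∑ x, D x) := by
          rw [Finset.sum_add_distrib, Finset.sum_sub_distrib, ← Finset.sum_mul, ← Finset.sum_div]
      _ ≤ Real.log M := by
          rw [hD.2]
          have := (div_le_one hM).2 hsum
          linarith
  have heq : ∑ x, D x * Real.logb 2 (t x) = (∑ x, D x * Real.log (t x)) / Real.log 2 := by
    rw [Finset.sum_div]
    exact Finset.sum_congr rfl fun x _ => by rw [Real.logb, mul_div_assoc]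
  rw [heq, Real.logb]
  gcongr

lemma pr_add_disjoint {p q : Ω → Prop} (h : ∀ x, ¬(p x ∧ q x)) (D : Ω → ℝ) :
    pr D (fun x => p x ∨ q x) = pr D p + pr D q := by
  unfold pr
  rw [← Finset.sum_add_distrib]
  refine Finset.sum_congr rfl fun x _ => ?_
  by_cases hp : p x
  · have hq : ¬ q x := fun hq => h x ⟨hp, hq⟩
    simp [hp, hq]
  · by_cases hq : q x <;> simp [hp, hq]

lemma sum_pr_mem (D : Ω → ℝ) (f : Ω → A) (q : Ω → Prop) (T : Finset A) :
    ∑ a ∈ T, pr D (fun x => f x = a ∧ q x) = pr D (fun x => f x ∈ T ∧ q x) := by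
  induction T using Finset.induction_on with
  | empty => simp [pr]
  | @insert a T ha ih =>
    rw [Finset.sum_insert ha, ih]
    rw [← pr_add_disjoint (p := fun x => f x = a ∧ q x) (q := fun x => f x ∈ T ∧ q x)
      (fun x hx => ha (hx.1.1 ▸ hx.2.1)) D]
    refine pr_congr (fun x => ?_) D
    constructor
    · rintro (⟨h1, h2⟩ | ⟨h1, h2⟩)
      · exact ⟨h1 ▸ Finset.mem_insert_self a T, h2⟩
      · exact ⟨Finset.mem_insert_of_mem h1, h2⟩
    · rintro ⟨h1, h2⟩
      rcases Finset.mem_insert.1 h1 with h1 | h1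
      · exact Or.inl ⟨h1, h2⟩
      · exact Or.inr ⟨h1, h2⟩

lemma pr_partition [DecidableEq A] (D : Ω → ℝ) (f : Ω → A) (q : Ω → Prop) :
    pr D q = ∑ a ∈ Finset.image f Finset.univ, pr D (fun x => f x = a ∧ q x) := by
  rw [sum_pr_mem]
  refine pr_congr (fun x => ?_) D
  constructor
  · intro h; exact ⟨Finset.mem_image_of_mem f (Finset.mem_univ x), h⟩
  · exact fun h => h.2

lemma sum_pr_pair_le (hD0 : ∀ x, 0 ≤ D x) (C' : Ω → A × B) (T : Finset A) (c : B) :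
    ∑ a ∈ T, pr D (fun x => C' x = (a, c)) ≤ pr D (fun x => (C' x).2 = c) := by
  have e1 : ∀ a, pr D (fun x => C' x = (a, c))
      = pr D (fun x => (C' x).1 = a ∧ (C' x).2 = c) :=
    fun a => pr_congr (fun x => by rw [Prod.ext_iff]) D
  calc ∑ a ∈ T, pr D (fun x => C' x = (a, c))
      = ∑ a ∈ T, pr D (fun x => (C' x).1 = a ∧ (C' x).2 = c) :=
        Finset.sum_congr rfl fun a _ => e1 a
    _ = pr D (fun x => (C' x).1 ∈ T ∧ (C' x).2 = c) := sum_pr_mem D _ _ T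
    _ ≤ pr D (fun x => (C' x).2 = c) := pr_mono hD0 fun x hx => hx.2


lemma mi_nonneg (hD : IsProb D) (A' : Ω → A) (B' : Ω → B) : 0 ≤ mi D A' B' := by
  have e : ∀ x ∈ (Finset.univ : Finset Ω),
      D x * Real.logb 2 (pr D (fun y => A' y = A' x) * pr D (fun y => B' y = B' x)
        / pr D (fun y => (A' y, B' y) = (A' x, B' x)))
      = (D x * Real.logb 2 (pr D (fun y => A' y = A' x))
          + D x * Real.logb 2 (pr D (fun y => B' y = B' x)))
        - D x * Real.logb 2 (pr D (fun y => (A' y, B' y) = (A' x, B' x))) := by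
    intro x _
    rcases (hD.1 x).lt_or_eq with hx | hx
    · have h1 := lt_of_lt_of_le hx (le_pr_self hD.1 A' x)
      have h2 := lt_of_lt_of_le hx (le_pr_self hD.1 B' x)
      have h3 := lt_of_lt_of_le hx (le_pr_self hD.1 (fun y => (A' y, B' y)) x)
      rw [Real.logb_div (by positivity) h3.ne', Real.logb_mul h1.ne' h2.ne']
      ring
    · rw [← hx]; ring
  have hrepr : mi D A' B' = -∑ x, D x * Real.logb 2
      (pr D (fun y => A' y = A' x) * pr D (fun y => B' y = B' x)
        / pr D (fun y => (A' y, B' y) = (A' x, B' x))) := by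
    simp only [mi]
    rw [ent_eq_sum D A', ent_eq_sum D B', ent_eq_sum D (fun x => (A' x, B' x))]
    rw [Finset.sum_congr rfl e, Finset.sum_sub_distrib, Finset.sum_add_distrib]
    ring
  have hsum : (∑ x, D x * (pr D (fun y => A' y = A' x) * pr D (fun y => B' y = B' x)
      / pr D (fun y => (A' y, B' y) = (A' x, B' x)))) ≤ 1 := by
    have key : (∑ x, D x * (pr D (fun y => A' y = A' x) * pr D (fun y => B' y = B' x)
          / pr D (fun y => (A' y, B' y) = (A' x, B' x))))
        = ∑ p ∈ Finset.image (fun x => (A' x, B' x)) Finset.univ,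
            pr D (fun x => (A' x, B' x) = p)
              * (pr D (fun y => A' y = p.1) * pr D (fun y => B' y = p.2)
                / pr D (fun y => (A' y, B' y) = p)) :=
      sum_mul_comp D (fun x => (A' x, B' x))
        (fun p => pr D (fun y => A' y = p.1) * pr D (fun y => B' y = p.2)
          / pr D (fun y => (A' y, B' y) = p))
    rw [key]
    calc ∑ p ∈ Finset.image (fun x => (A' x, B' x)) Finset.univ,
          pr D (fun x => (A' x, B' x) = p)
            * (pr D (fun y => A' y = p.1) * pr D (fun y => B' y = p.2)
              / pr D (fun y => (A' y, B' y) = p))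
        ≤ ∑ p ∈ Finset.image (fun x => (A' x, B' x)) Finset.univ,
            pr D (fun y => A' y = p.1) * pr D (fun y => B' y = p.2) := by
          refine Finset.sum_le_sum fun p hp => ?_
          rcases (pr_nonneg hD.1 (fun x => (A' x, B' x) = p)).lt_or_eq with h0 | h0
          · rw [mul_comm, div_mul_cancel₀ _ h0.ne']
          · rw [← h0, zero_mul]
            exact mul_nonneg (pr_nonneg hD.1 _) (pr_nonneg hD.1 _)
      _ ≤ ∑ p ∈ (Finset.image A' Finset.univ) ×ˢ (Finset.image B' Finset.univ),
            pr D (fun y => A' y = p.1) * pr D (fun y => B' y = p.2) := by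
          refine Finset.sum_le_sum_of_subset_of_nonneg ?_ fun p _ _ =>
            mul_nonneg (pr_nonneg hD.1 _) (pr_nonneg hD.1 _)
          intro p hp
          rcases Finset.mem_image.1 hp with ⟨x, _, rfl⟩
          exact Finset.mem_product.2 ⟨Finset.mem_image_of_mem _ (Finset.mem_univ x),
            Finset.mem_image_of_mem _ (Finset.mem_univ x)⟩
      _ = 1 := by
          rw [Finset.sum_product]
          dsimp only
          rw [← Finset.sum_mul_sum, pr_total hD A', pr_total hD B', one_mul]
  have hmain := gibbs hD _ (fun x hx => by
      have h1 := lt_of_lt_of_le hx (le_pr_self hD.1 A' x)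
      have h2 := lt_of_lt_of_le hx (le_pr_self hD.1 B' x)
      have h3 := lt_of_lt_of_le hx (le_pr_self hD.1 (fun y => (A' y, B' y)) x)
      positivity) one_pos hsum
  rw [Real.logb_one] at hmain
  rw [hrepr]
  linarith

lemma mi_dp (hD : IsProb D) (A' : Ω → A) (B' : Ω → B) (g : B → C) :
    mi D A' (fun x => g (B' x)) ≤ mi D A' B' := by
  have arith : ∀ a n d : ℝ, a ≠ 0 → a * (n / (d * a)) = n / d := by
    intro a n d ha
    rcases eq_or_ne d 0 with rfl | hd
    · simp
    · field_simp
  have e : ∀ x ∈ (Finset.univ : Finset Ω),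
      D x * Real.logb 2 (pr D (fun y => B' y = B' x)
          * pr D (fun y => (A' y, g (B' y)) = (A' x, g (B' x)))
        / (pr D (fun y => g (B' y) = g (B' x)) * pr D (fun y => (A' y, B' y) = (A' x, B' x))))
      = (D x * Real.logb 2 (pr D (fun y => B' y = B' x))
          + D x * Real.logb 2 (pr D (fun y => (A' y, g (B' y)) = (A' x, g (B' x)))))
        - (D x * Real.logb 2 (pr D (fun y => g (B' y) = g (B' x)))
          + D x * Real.logb 2 (pr D (fun y => (A' y, B' y) = (A' x, B' x)))) := by
    intro x _
    rcases (hD.1 x).lt_or_eq with hx | hx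
    · have h1 := lt_of_lt_of_le hx (le_pr_self hD.1 B' x)
      have h2 := lt_of_lt_of_le hx (le_pr_self hD.1 (fun y => (A' y, g (B' y))) x)
      have h3 := lt_of_lt_of_le hx (le_pr_self hD.1 (fun y => g (B' y)) x)
      have h4 := lt_of_lt_of_le hx (le_pr_self hD.1 (fun y => (A' y, B' y)) x)
      rw [Real.logb_div (by positivity) (by positivity), Real.logb_mul h1.ne' h2.ne',
        Real.logb_mul h3.ne' h4.ne']
      ring
    · rw [← hx]; ring
  have hrepr : mi D A' B' - mi D A' (fun x => g (B' x))
      = -∑ x, D x * Real.logb 2 (pr D (fun y => B' y = B' x)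
          * pr D (fun y => (A' y, g (B' y)) = (A' x, g (B' x)))
        / (pr D (fun y => g (B' y) = g (B' x))
          * pr D (fun y => (A' y, B' y) = (A' x, B' x)))) := by
    simp only [mi]
    rw [ent_eq_sum D B', ent_eq_sum D (fun x => g (B' x)),
      ent_eq_sum D (fun x => (A' x, B' x)), ent_eq_sum D (fun x => (A' x, g (B' x)))]
    rw [Finset.sum_congr rfl e, Finset.sum_sub_distrib, Finset.sum_add_distrib,
      Finset.sum_add_distrib]
    ring
  have hsum : (∑ x, D x * (pr D (fun y => B' y = B' x)
      * pr D (fun y => (A' y, g (B' y)) = (A' x, g (B' x)))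
        / (pr D (fun y => g (B' y) = g (B' x))
          * pr D (fun y => (A' y, B' y) = (A' x, B' x))))) ≤ 1 := by
    have key : (∑ x, D x * (pr D (fun y => B' y = B' x)
        * pr D (fun y => (A' y, g (B' y)) = (A' x, g (B' x)))
        / (pr D (fun y => g (B' y) = g (B' x)) * pr D (fun y => (A' y, B' y) = (A' x, B' x)))))
        = ∑ p ∈ Finset.image (fun x => (A' x, B' x)) Finset.univ,
            pr D (fun x => (A' x, B' x) = p)
              * (pr D (fun y => B' y = p.2) * pr D (fun y => (A' y, g (B' y)) = (p.1, g p.2))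
                / (pr D (fun y => g (B' y) = g p.2) * pr D (fun y => (A' y, B' y) = p))) :=
      sum_mul_comp D (fun x => (A' x, B' x))
        (fun p => pr D (fun y => B' y = p.2) * pr D (fun y => (A' y, g (B' y)) = (p.1, g p.2))
          / (pr D (fun y => g (B' y) = g p.2) * pr D (fun y => (A' y, B' y) = p)))
    rw [key]
    have step4 : ∀ b ∈ Finset.image B' Finset.univ,
        (∑ a ∈ Finset.image A' Finset.univ,
          pr D (fun y => B' y = b) * pr D (fun y => (A' y, g (B' y)) = (a, g b))
            / pr D (fun y => g (B' y) = g b)) ≤ pr D (fun y => B' y = b) := by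
      intro b _
      have hble : pr D (fun y => B' y = b) ≤ pr D (fun y => g (B' y) = g b) :=
        pr_mono hD.1 fun x hx => by rw [hx]
      have hS : (∑ a ∈ Finset.image A' Finset.univ,
          pr D (fun y => (A' y, g (B' y)) = (a, g b))) ≤ pr D (fun y => g (B' y) = g b) := by
        have := sum_pr_pair_le hD.1 (fun y => (A' y, g (B' y)))
          (Finset.image A' Finset.univ) (g b)
        exact this.trans_eq (pr_congr (fun x => Iff.rfl) D)
      rcases eq_or_ne (pr D (fun y => g (B' y) = g b)) 0 with h0 | h0
      · have hb0 : pr D (fun y => B' y = b) = 0 :=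
          le_antisymm (h0 ▸ hble) (pr_nonneg hD.1 _)
        rw [hb0]
        simp
      · calc (∑ a ∈ Finset.image A' Finset.univ,
            pr D (fun y => B' y = b) * pr D (fun y => (A' y, g (B' y)) = (a, g b))
              / pr D (fun y => g (B' y) = g b))
            = (∑ a ∈ Finset.image A' Finset.univ,
                pr D (fun y => (A' y, g (B' y)) = (a, g b)))
              * (pr D (fun y => B' y = b) / pr D (fun y => g (B' y) = g b)) := by
              rw [Finset.sum_mul]
              exact Finset.sum_congr rfl fun a _ => by ring
          _ ≤ pr D (fun y => g (B' y) = g b)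
              * (pr D (fun y => B' y = b) / pr D (fun y => g (B' y) = g b)) :=
              mul_le_mul_of_nonneg_right hS
                (div_nonneg (pr_nonneg hD.1 _) (pr_nonneg hD.1 _))
          _ = pr D (fun y => B' y = b) := by
              rw [mul_comm, div_mul_cancel₀ _ h0]
    calc ∑ p ∈ Finset.image (fun x => (A' x, B' x)) Finset.univ,
          pr D (fun x => (A' x, B' x) = p)
            * (pr D (fun y => B' y = p.2) * pr D (fun y => (A' y, g (B' y)) = (p.1, g p.2))
              / (pr D (fun y => g (B' y) = g p.2) * pr D (fun y => (A' y, B' y) = p)))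
        ≤ ∑ p ∈ Finset.image (fun x => (A' x, B' x)) Finset.univ,
            pr D (fun y => B' y = p.2) * pr D (fun y => (A' y, g (B' y)) = (p.1, g p.2))
              / pr D (fun y => g (B' y) = g p.2) := by
          refine Finset.sum_le_sum fun p hp => ?_
          rcases (pr_nonneg hD.1 (fun x => (A' x, B' x) = p)).lt_or_eq with h0 | h0
          · rw [arith _ _ _ h0.ne']
          · rw [← h0, zero_mul]
            exact div_nonneg (mul_nonneg (pr_nonneg hD.1 _) (pr_nonneg hD.1 _))
              (pr_nonneg hD.1 _)
      _ ≤ ∑ p ∈ (Finset.image A' Finset.univ) ×ˢ (Finset.image B' Finset.univ),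
            pr D (fun y => B' y = p.2) * pr D (fun y => (A' y, g (B' y)) = (p.1, g p.2))
              / pr D (fun y => g (B' y) = g p.2) := by
          refine Finset.sum_le_sum_of_subset_of_nonneg ?_ fun p _ _ =>
            div_nonneg (mul_nonneg (pr_nonneg hD.1 _) (pr_nonneg hD.1 _)) (pr_nonneg hD.1 _)
          intro p hp
          rcases Finset.mem_image.1 hp with ⟨x, _, rfl⟩
          exact Finset.mem_product.2 ⟨Finset.mem_image_of_mem _ (Finset.mem_univ x),
            Finset.mem_image_of_mem _ (Finset.mem_univ x)⟩
      _ = ∑ b ∈ Finset.image B' Finset.univ, ∑ a ∈ Finset.image A' Finset.univ,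
            pr D (fun y => B' y = b) * pr D (fun y => (A' y, g (B' y)) = (a, g b))
              / pr D (fun y => g (B' y) = g b) := by
          rw [Finset.sum_product_right]
      _ ≤ ∑ b ∈ Finset.image B' Finset.univ, pr D (fun y => B' y = b) :=
          Finset.sum_le_sum step4
      _ = 1 := pr_total hD B'
  have hmain := gibbs hD _ (fun x hx => by
      have h1 := lt_of_lt_of_le hx (le_pr_self hD.1 B' x)
      have h2 := lt_of_lt_of_le hx (le_pr_self hD.1 (fun y => (A' y, g (B' y))) x)
      have h3 := lt_of_lt_of_le hx (le_pr_self hD.1 (fun y => g (B' y)) x)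
      have h4 := lt_of_lt_of_le hx (le_pr_self hD.1 (fun y => (A' y, B' y)) x)
      positivity) one_pos hsum
  rw [Real.logb_one] at hmain
  linarith [hrepr]


lemma cond_le {E Y V W : Type*} (hD : IsProb D) (ε : ℝ) (e : Ω → E) (F : Ω → Y)
    (v : Ω → V) (w : Ω → W)
    (g : Y → V × W) (hg : ∀ x, (v x, w x) = g (F x))
    (φ : E × V → W) (hφ : ∀ x, w x = φ (e x, v x))
    (hmi : mi D e F ≤ ε) :
    ent D (fun x => (v x, w x)) - ent D v ≤ ε := by
  have hΨ : Function.Injective (fun p : E × V => (p.1, (p.2, φ p))) := by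
    intro p q h
    have h' : (p.1, (p.2, φ p)) = (q.1, (q.2, φ q)) := h
    have h1 := congrArg (fun z : E × (V × W) => z.1) h'
    have h2 := congrArg (fun z : E × (V × W) => z.2.1) h'
    exact Prod.ext h1 h2
  have hA : ent D (fun x => (e x, (v x, w x))) = ent D (fun x => (e x, v x)) := by
    have hfun : (fun x => (e x, (v x, w x)))
        = fun x => (fun p : E × V => (p.1, (p.2, φ p))) ((e x, v x)) := by
      funext x
      dsimp only
      rw [← hφ x]
    rw [hfun, ent_comp_inj D (fun x => (e x, v x)) hΨ]
  have h0 : 0 ≤ mi D e v := mi_nonneg hD e v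
  have hdp : mi D e (fun x => (v x, w x)) ≤ mi D e F := by
    have hfun : (fun x => (v x, w x)) = fun x => g (F x) := funext hg
    rw [hfun]
    exact mi_dp hD e F g
  have hm1 : mi D e (fun x => (v x, w x))
      = ent D e + ent D (fun x => (v x, w x)) - ent D (fun x => (e x, (v x, w x))) := rfl
  have hm2 : mi D e v = ent D e + ent D v - ent D (fun x => (e x, v x)) := rfl
  linarith [hA, hdp, hmi, h0, hm1.le, hm1.ge, hm2.le, hm2.ge, hA.le, hA.ge]

lemma decode {V W : Type*} [Nonempty W] (hD : IsProb D) {ε : ℝ}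
    (v : Ω → V) (w : Ω → W)
    (hcond : ent D (fun x => (v x, w x)) - ent D v ≤ ε) :
    ∃ s : V → W, pr D (fun x => s (v x) ≠ w x) ≤ 1 - (2:ℝ) ^ (-ε) := by
  cases isEmpty_or_nonempty Ω with
  | inl hempty => exact absurd hD.2 (by simp)
  | inr hΩ =>
  have hne : (Finset.image w Finset.univ).Nonempty :=
    ⟨w (Classical.arbitrary Ω), Finset.mem_image_of_mem _ (Finset.mem_univ _)⟩
  have hmax : ∀ a : V, ∃ b ∈ Finset.image w Finset.univ,
      ∀ b' ∈ Finset.image w Finset.univ,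
        pr D (fun x => (v x, w x) = (a, b')) ≤ pr D (fun x => (v x, w x) = (a, b)) :=
    fun a => Finset.exists_max_image (Finset.image w Finset.univ)
      (fun b => pr D (fun x => (v x, w x) = (a, b))) hne
  choose s _ hs2 using hmax
  refine ⟨s, ?_⟩
  suffices hkey : (2:ℝ) ^ (-ε) ≤ pr D (fun x => s (v x) = w x) by
    have hc := pr_add_compl hD (fun x => s (v x) = w x)
    have hc2 : pr D (fun x => ¬ s (v x) = w x) = pr D (fun x => s (v x) ≠ w x) := rfl
    linarith [hc2.le, hc2.ge]
  -- positivity of the "collision" sum M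
  obtain ⟨x₀, hx₀⟩ : ∃ x, 0 < D x := by
    by_contra hcon
    push_neg at hcon
    have hle : ∑ x, D x ≤ 0 := Finset.sum_nonpos fun x _ => hcon x
    rw [hD.2] at hle; linarith
  have hterm : ∀ x ∈ (Finset.univ : Finset Ω), 0 ≤ D x
      * (pr D (fun y => (v y, w y) = (v x, w x)) / pr D (fun y => v y = v x)) := fun x _ =>
    mul_nonneg (hD.1 x) (div_nonneg (pr_nonneg hD.1 _) (pr_nonneg hD.1 _))
  have hM0 : 0 < ∑ x, D x
      * (pr D (fun y => (v y, w y) = (v x, w x)) / pr D (fun y => v y = v x)) := by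
    have hx := Finset.single_le_sum hterm (Finset.mem_univ x₀)
    have hp1 := lt_of_lt_of_le hx₀ (le_pr_self hD.1 (fun y => (v y, w y)) x₀)
    have hp2 := lt_of_lt_of_le hx₀ (le_pr_self hD.1 v x₀)
    have hpos : 0 < D x₀
        * (pr D (fun y => (v y, w y) = (v x₀, w x₀)) / pr D (fun y => v y = v x₀)) := by
      positivity
    linarith
  -- entropy representation
  have e : ∀ x ∈ (Finset.univ : Finset Ω),
      D x * Real.logb 2 (pr D (fun y => (v y, w y) = (v x, w x)) / pr D (fun y => v y = v x))
      = D x * Real.logb 2 (pr D (fun y => (v y, w y) = (v x, w x)))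
        - D x * Real.logb 2 (pr D (fun y => v y = v x)) := by
    intro x _
    rcases (hD.1 x).lt_or_eq with hx | hx
    · have h1 := lt_of_lt_of_le hx (le_pr_self hD.1 (fun y => (v y, w y)) x)
      have h2 := lt_of_lt_of_le hx (le_pr_self hD.1 v x)
      rw [Real.logb_div h1.ne' h2.ne']
      ring
    · rw [← hx]; ring
  have hrepr : ent D v - ent D (fun x => (v x, w x))
      = ∑ x, D x * Real.logb 2
          (pr D (fun y => (v y, w y) = (v x, w x)) / pr D (fun y => v y = v x)) := by
    rw [ent_eq_sum D v, ent_eq_sum D (fun x => (v x, w x))]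
    rw [Finset.sum_congr rfl e, Finset.sum_sub_distrib]
    ring
  have hgib := gibbs hD
    (fun x => pr D (fun y => (v y, w y) = (v x, w x)) / pr D (fun y => v y = v x))
    (fun x hx => by
      have h1 := lt_of_lt_of_le hx (le_pr_self hD.1 (fun y => (v y, w y)) x)
      have h2 := lt_of_lt_of_le hx (le_pr_self hD.1 v x)
      positivity) hM0 (le_refl _)
  have hlb : -ε ≤ Real.logb 2 (∑ x, D x
      * (pr D (fun y => (v y, w y) = (v x, w x)) / pr D (fun y => v y = v x))) := by
    linarith [hcond, hrepr.le, hrepr.ge, hgib]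
  have h2M : (2:ℝ) ^ (-ε) ≤ ∑ x, D x
      * (pr D (fun y => (v y, w y) = (v x, w x)) / pr D (fun y => v y = v x)) := by
    have := Real.rpow_le_rpow_of_exponent_le (one_le_two) hlb
    rwa [Real.rpow_logb (by norm_num) (by norm_num) hM0] at this
  refine le_trans h2M ?_
  -- now bound M by the success probability of the MAP decoder s
  calc (∑ x, D x * (pr D (fun y => (v y, w y) = (v x, w x)) / pr D (fun y => v y = v x)))
      = ∑ p ∈ Finset.image (fun x => (v x, w x)) Finset.univ,
          pr D (fun x => (v x, w x) = p)
            * (pr D (fun y => (v y, w y) = p) / pr D (fun y => v y = p.1)) :=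
        sum_mul_comp D (fun x => (v x, w x))
          (fun p => pr D (fun y => (v y, w y) = p) / pr D (fun y => v y = p.1))
    _ ≤ ∑ p ∈ Finset.image (fun x => (v x, w x)) Finset.univ,
          pr D (fun x => (v x, w x) = p)
            * (pr D (fun y => (v y, w y) = (p.1, s p.1)) / pr D (fun y => v y = p.1)) := by
        refine Finset.sum_le_sum fun p hp => ?_
        have hmem : p.2 ∈ Finset.image w Finset.univ := by
          rcases Finset.mem_image.1 hp with ⟨x, _, rfl⟩
          exact Finset.mem_image_of_mem _ (Finset.mem_univ x)
        have hmax' := hs2 p.1 p.2 hmem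
        have hmax'' : pr D (fun x => (v x, w x) = p)
            ≤ pr D (fun x => (v x, w x) = (p.1, s p.1)) := by
          refine le_trans (le_of_eq (pr_congr (fun x => ?_) D)) hmax'
          rw [Prod.mk.eta]
        apply mul_le_mul_of_nonneg_left ?_ (pr_nonneg hD.1 _)
        rcases (pr_nonneg hD.1 (fun y => v y = p.1)).lt_or_eq with hc | hc
        · exact (div_le_div_iff_of_pos_right hc).2 hmax''
        · rw [← hc]
          simp
    _ = ∑ x, D x * (pr D (fun y => (v y, w y) = (v x, s (v x))) / pr D (fun y => v y = v x)) :=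
        (sum_mul_comp D (fun x => (v x, w x))
          (fun p => pr D (fun y => (v y, w y) = (p.1, s p.1)) / pr D (fun y => v y = p.1))).symm
    _ = ∑ a ∈ Finset.image v Finset.univ,
          pr D (fun x => v x = a)
            * (pr D (fun y => (v y, w y) = (a, s a)) / pr D (fun y => v y = a)) :=
        sum_mul_comp D v (fun a => pr D (fun y => (v y, w y) = (a, s a)) / pr D (fun y => v y = a))
    _ ≤ ∑ a ∈ Finset.image v Finset.univ, pr D (fun y => (v y, w y) = (a, s a)) := by
        refine Finset.sum_le_sum fun a _ => ?_
        rcases (pr_nonneg hD.1 (fun y => v y = a)).lt_or_eq with hc | hc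
        · rw [mul_comm, div_mul_cancel₀ _ hc.ne']
        · rw [← hc, zero_mul]
          exact pr_nonneg hD.1 _
    _ ≤ pr D (fun x => s (v x) = w x) := by
        rw [pr_partition D v (fun x => s (v x) = w x)]
        refine Finset.sum_le_sum fun a _ => pr_mono hD.1 fun x hx => ?_
        have h1 : v x = a := congrArg Prod.fst hx
        have h2 : w x = s a := congrArg Prod.snd hx
        exact ⟨h1, by rw [h1, ← h2]⟩

end Lemmas

/-- Two `ε`-intersections `u₁, u₂` of the same pair `f₁, f₂` are nearly equivalent:
`I(u₁;u₂) ≥ max(H(u₁), H(u₂)) - ε` and each can be decoded from the other with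
error at most `1 - 2^(-ε)`. -/
theorem intersections_equivalent
    {Ω X₁ X₂ E₁ E₂ E₁' E₂' U₁ U₂ : Type*} [Fintype Ω] [Nonempty U₁] [Nonempty U₂]
    (D : Ω → ℝ) (hD : IsProb D)
    (f₁ : Ω → X₁) (f₂ : Ω → X₂) (ε : ℝ) (hε : 0 ≤ ε)
    (u₁ : Ω → U₁) (u₂ : Ω → U₂)
    (e₁₁ : Ω → E₁) (e₂₁ : Ω → E₂) (e₁₂ : Ω → E₁') (e₂₂ : Ω → E₂')
    (r₁₁ : X₁ → E₁ × U₁) (r₂₁ : X₂ → E₂ × U₁) (r₁₂ : X₁ → E₁' × U₂) (r₂₂ : X₂ → E₂' × U₂)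
    (hr₁₁ : Function.Bijective r₁₁) (hr₂₁ : Function.Bijective r₂₁)
    (hr₁₂ : Function.Bijective r₁₂) (hr₂₂ : Function.Bijective r₂₂)
    (hdec₁₁ : ∀ x, r₁₁ (f₁ x) = (e₁₁ x, u₁ x)) (hdec₂₁ : ∀ x, r₂₁ (f₂ x) = (e₂₁ x, u₁ x))
    (hdec₁₂ : ∀ x, r₁₂ (f₁ x) = (e₁₂ x, u₂ x)) (hdec₂₂ : ∀ x, r₂₂ (f₂ x) = (e₂₂ x, u₂ x))
    (hind₁₁ : mi D e₁₁ f₂ ≤ ε) (hind₂₁ : mi D e₂₁ f₁ ≤ ε)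
    (hind₁₂ : mi D e₁₂ f₂ ≤ ε) (hind₂₂ : mi D e₂₂ f₁ ≤ ε) :
    max (ent D u₁) (ent D u₂) - ε ≤ mi D u₁ u₂ ∧
      ∃ (s₁ : U₁ → U₂) (s₂ : U₂ → U₁),
        pr D (fun x => s₁ (u₁ x) ≠ u₂ x) ≤ 1 - (2 : ℝ) ^ (-ε) ∧
        pr D (fun x => s₂ (u₂ x) ≠ u₁ x) ≤ 1 - (2 : ℝ) ^ (-ε) := by
  have h2 : ent D (fun x => (u₁ x, u₂ x)) - ent D u₁ ≤ ε := by
    refine cond_le hD ε e₂₁ f₁ u₁ u₂ (fun y => ((r₁₁ y).2, (r₁₂ y).2)) (fun x => ?_)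
      (fun p => (r₂₂ (Function.surjInv hr₂₁.surjective p)).2) (fun x => ?_) hind₂₁
    · show (u₁ x, u₂ x) = ((r₁₁ (f₁ x)).2, (r₁₂ (f₁ x)).2)
      rw [hdec₁₁ x, hdec₁₂ x]
    · have hinv : Function.surjInv hr₂₁.surjective (e₂₁ x, u₁ x) = f₂ x := by
        apply hr₂₁.injective
        rw [Function.surjInv_eq hr₂₁.surjective, hdec₂₁ x]
      show u₂ x = (r₂₂ (Function.surjInv hr₂₁.surjective (e₂₁ x, u₁ x))).2
      rw [hinv, hdec₂₂ x]
  have h1 : ent D (fun x => (u₂ x, u₁ x)) - ent D u₂ ≤ ε := by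
    refine cond_le hD ε e₁₂ f₂ u₂ u₁ (fun y => ((r₂₂ y).2, (r₂₁ y).2)) (fun x => ?_)
      (fun p => (r₁₁ (Function.surjInv hr₁₂.surjective p)).2) (fun x => ?_) hind₁₂
    · show (u₂ x, u₁ x) = ((r₂₂ (f₂ x)).2, (r₂₁ (f₂ x)).2)
      rw [hdec₂₂ x, hdec₂₁ x]
    · have hinv : Function.surjInv hr₁₂.surjective (e₁₂ x, u₂ x) = f₁ x := by
        apply hr₁₂.injective
        rw [Function.surjInv_eq hr₁₂.surjective, hdec₁₂ x]
      show u₁ x = (r₁₁ (Function.surjInv hr₁₂.surjective (e₁₂ x, u₂ x))).2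
      rw [hinv, hdec₁₁ x]
  have hswap : ent D (fun x => (u₂ x, u₁ x)) = ent D (fun x => (u₁ x, u₂ x)) :=
    ent_comp_inj D (fun x => (u₁ x, u₂ x)) (Prod.swap_injective)
  have hmi_eq : mi D u₁ u₂ = ent D u₁ + ent D u₂ - ent D (fun x => (u₁ x, u₂ x)) := rfl
  constructor
  · rw [sub_le_iff_le_add]
    apply max_le
    · linarith [hmi_eq.le, hmi_eq.ge, h1, hswap.le, hswap.ge]
    · linarith [hmi_eq.le, hmi_eq.ge, h2]
  · obtain ⟨s₁, hs₁⟩ := decode hD u₁ u₂ h2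
    obtain ⟨s₂, hs₂⟩ := decode hD u₂ u₁ h1
    exact ⟨s₁, s₂, hs₁, hs₂⟩
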